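/- arXiv:1810.07301 — 3 statements merged into one kernel-verified Lean document; each statement's English description precedes it below -/
import Mathlib

section
/- Let L ≥ 1 be an integer and set γ = (L+1)^{-1/L}, and run Peek Search with latency L and discount factor γ on a first-order (n = 1) time-homogeneous Markov reward instance whose transition digraph is complete (diameter Δ = 1). Then OPT ≤ (1 + 1/L)·(L+1)^{1/L}·ON; that is, the competitive ratio of Peek Search is at most (1 + 1/L)·(L+1)^{1/L}. -/
/-!
Let `V i` be the discounted value of the path Peek Search commits to at time `i`. Its tail is
still available at time `i + 1`, so `V i` is at most the online reward at time `i` plus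
`γ V (i + 1)`, and summing gives `(1 - γ) ∑ V ≤ ON`. Conversely, splicing the offline sequence
onto the online history shows `V i ≥ γ · (discounted offline reward from time i + 1)`, and
summing over `i` gives `∑ V ≥ γ (1 + ⋯ + γ ^ (L - 1)) OPT`. Hence `γ (1 - γ ^ L) OPT ≤ ON`, and
for `γ = (L + 1) ^ (-1 / L)` the factor `γ (1 - γ ^ L)` is the inverse of the claimed ratio.
-/

open Finset

namespace PeekSearch

theorem sum_Icc_comp_add {M : Type*} [AddCommMonoid M] (f : ℤ → M) (a b c : ℤ) :
    ∑ i ∈ Icc a b, f (i + c) = ∑ i ∈ Icc (a + c) (b + c), f i := by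
  rw [← map_add_right_Icc, sum_map]
  rfl

theorem sum_Icc_comp_add_of_eq_zero {M : Type*} [AddCommMonoid M] {f : ℤ → M} {a b c : ℤ}
    (hc : 0 ≤ c) (hlow : ∀ t < a + c, f t = 0) (hhigh : ∀ t, b < t → f t = 0) :
    ∑ i ∈ Icc a b, f (i + c) = ∑ i ∈ Icc a b, f i := by
  have hsum : ∀ a' b', a' ≤ a + c → b ≤ b' →
      ∑ i ∈ Icc a' b', f i = ∑ i ∈ Icc (a + c) b, f i := fun a' b' ha hb =>
    (sum_subset (Icc_subset_Icc ha hb) fun t ht hnt => by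
      simp only [mem_Icc] at ht hnt
      rcases not_and_or.mp hnt with h | h
      · exact hlow t (by omega)
      · exact hhigh t (by omega)).symm
  rw [sum_Icc_comp_add, hsum _ _ le_rfl (by omega), hsum a b (by omega) le_rfl]

theorem one_sub_mul_sum_le_of_le_add_mul_succ {V a : ℤ → ℝ} {γ : ℝ} {T : ℤ}
    (hV : ∀ i, 0 ≤ V i) (hVT : V (T + 1) = 0) (hγ : 0 ≤ γ)
    (hstep : ∀ i ∈ Icc 1 T, V i ≤ a i + γ * V (i + 1)) :
    (1 - γ) * ∑ i ∈ Icc 1 T, V i ≤ ∑ i ∈ Icc 1 T, a i := by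
  classical
  have hshift : ∑ i ∈ Icc 1 T, V (i + 1) ≤ ∑ i ∈ Icc 1 T, V i :=
    calc ∑ i ∈ Icc 1 T, V (i + 1) = ∑ i ∈ Icc 2 (T + 1), V i := sum_Icc_comp_add V 1 T 1
      _ ≤ ∑ i ∈ insert (T + 1) (Icc 1 T), V i :=
        sum_le_sum_of_subset_of_nonneg
          (fun t ht => by simp only [mem_insert, mem_Icc] at ht ⊢; omega) fun i _ _ => hV i
      _ = ∑ i ∈ Icc 1 T, V i := sum_insert_of_eq_zero_if_notMem fun _ => hVT
  have := sum_le_sum hstep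
  rw [sum_add_distrib, ← mul_sum] at this
  nlinarith

section Rewards

variable {K : Type*} {γ : ℝ} {r : ℤ → K → K → ℝ}

noncomputable def discountedReward (γ : ℝ) (r : ℤ → K → K → ℝ) (n : ℕ) (i : ℤ) (y : ℤ → K) : ℝ :=
  ∑ j ∈ range n, γ ^ j * r (i + (j : ℤ)) (y (i + (j : ℤ) - 1)) (y (i + (j : ℤ)))

noncomputable def totalReward (r : ℤ → K → K → ℝ) (T : ℤ) (y : ℤ → K) : ℝ :=
  ∑ i ∈ Icc (1 : ℤ) T, r i (y (i - 1)) (y i)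

theorem discountedReward_succ (n : ℕ) (i : ℤ) (y : ℤ → K) :
    discountedReward γ r (n + 1) i y
      = r i (y (i - 1)) (y i) + γ * discountedReward γ r n (i + 1) y := by
  rw [discountedReward, sum_range_succ', discountedReward, mul_sum, add_comm]
  congr 1
  · simp
  · refine sum_congr rfl fun j _ => ?_
    rw [Nat.cast_succ, add_comm (j : ℤ), ← add_assoc, pow_succ', mul_assoc]

theorem discountedReward_nonneg (hγ : 0 ≤ γ) (hr : ∀ t a b, 0 ≤ r t a b)
    (n : ℕ) (i : ℤ) (y : ℤ → K) : 0 ≤ discountedReward γ r n i y :=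
  sum_nonneg fun _ _ => mul_nonneg (pow_nonneg hγ _) (hr _ _ _)

theorem discountedReward_le_succ (hγ : 0 ≤ γ) (hr : ∀ t a b, 0 ≤ r t a b)
    (n : ℕ) (i : ℤ) (y : ℤ → K) :
    discountedReward γ r n i y ≤ discountedReward γ r (n + 1) i y := by
  rw [discountedReward, discountedReward, sum_range_succ]
  exact le_add_of_nonneg_right (mul_nonneg (pow_nonneg hγ _) (hr _ _ _))

theorem discountedReward_congr {n : ℕ} {i : ℤ} {y y' : ℤ → K} (h : ∀ t, i - 1 ≤ t → y t = y' t) :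
    discountedReward γ r n i y = discountedReward γ r n i y' :=
  sum_congr rfl fun j _ => by rw [h _ (by omega), h _ (by omega)]

theorem discountedReward_eq_zero {T : ℤ} (hr : ∀ t, T < t → r t = 0) {i : ℤ} (hi : T < i)
    (n : ℕ) (y : ℤ → K) : discountedReward γ r n i y = 0 :=
  sum_eq_zero fun j _ => by rw [hr _ (by omega)]; simp

/-- Each transition of `y` is counted once with each weight `γ ^ j`; the vanishing of `r` near
the ends of the horizon makes the shifted sums agree with the unshifted one. -/
theorem sum_discountedReward_succ {n : ℕ} {T : ℤ} (hlow : ∀ t ≤ (n : ℤ), r t = 0)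
    (hhigh : ∀ t, T < t → r t = 0) (y : ℤ → K) :
    ∑ i ∈ Icc (1 : ℤ) T, discountedReward γ r n (i + 1) y
      = (∑ j ∈ range n, γ ^ j) * totalReward r T y := by
  simp only [discountedReward]
  rw [sum_comm, sum_mul]
  refine sum_congr rfl fun j hj => ?_
  rw [← mul_sum, totalReward]
  congr 1
  simp only [add_assoc]
  exact sum_Icc_comp_add_of_eq_zero (f := fun t => r t (y (t - 1)) (y t)) (by omega)
    (fun t ht => by simp only [mem_range] at hj; simp [hlow t (by omega)])
    (fun t ht => by simp [hhigh t ht])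

end Rewards

section PeekPaths

variable {K : Type*} {γ : ℝ} {r : ℤ → K → K → ℝ} {L : ℕ} {yhat : ℤ → K}

def IsPeekPath (γ : ℝ) (r : ℤ → K → K → ℝ) (L : ℕ) (yhat : ℤ → K) (i : ℤ) (p : ℤ → K) : Prop :=
  (∀ t < i, p t = yhat t) ∧ p i = yhat i ∧
    ∀ y : ℤ → K, (∀ t < i, y t = yhat t) →
      discountedReward γ r (L + 1) i y ≤ discountedReward γ r (L + 1) i p

def IsPeekSearch (γ : ℝ) (r : ℤ → K → K → ℝ) (L : ℕ) (T : ℤ) (yhat : ℤ → K) : Prop :=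
  ∀ i : ℤ, 1 ≤ i → i ≤ T → ∃ p : ℤ → K, IsPeekPath γ r L yhat i p

namespace IsPeekPath

variable {i : ℤ} {p : ℤ → K}

theorem discountedReward_eq (hp : IsPeekPath γ r L yhat i p) :
    discountedReward γ r (L + 1) i p
      = r i (yhat (i - 1)) (yhat i) + γ * discountedReward γ r L (i + 1) p := by
  rw [discountedReward_succ, hp.1 (i - 1) (by omega), hp.2.1]

theorem discountedReward_le_succ {q : ℤ → K} (hp : IsPeekPath γ r L yhat i p)
    (hq : IsPeekPath γ r L yhat (i + 1) q) :
    discountedReward γ r (L + 1) (i + 1) p ≤ discountedReward γ r (L + 1) (i + 1) q :=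
  hq.2.2 p fun t ht => (lt_or_eq_of_le (Int.lt_add_one_iff.mp ht)).elim (hp.1 t) (· ▸ hp.2.1)

/-- Splicing `yhat` before time `i` with `y` from time `i` on gives a candidate whose
discounted reward from time `i + 1` is that of `y`. -/
theorem mul_discountedReward_le (hr : ∀ t a b, 0 ≤ r t a b)
    (hp : IsPeekPath γ r L yhat i p) (y : ℤ → K) :
    γ * discountedReward γ r L (i + 1) y ≤ discountedReward γ r (L + 1) i p := by
  classical
  set z : ℤ → K := fun t => if t < i then yhat t else y t
  have hzy : discountedReward γ r L (i + 1) z = discountedReward γ r L (i + 1) y :=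
    discountedReward_congr fun t ht => if_neg (by omega)
  calc γ * discountedReward γ r L (i + 1) y
      ≤ r i (z (i - 1)) (z i) + γ * discountedReward γ r L (i + 1) z :=
        hzy ▸ le_add_of_nonneg_left (hr _ _ _)
    _ = discountedReward γ r (L + 1) i z := (discountedReward_succ L i z).symm
    _ ≤ discountedReward γ r (L + 1) i p := hp.2.2 z fun t ht => if_pos ht

end IsPeekPath

theorem IsPeekSearch.mul_totalReward_le {T : ℤ} (hPS : IsPeekSearch γ r L T yhat)
    (hγ₀ : 0 ≤ γ) (hγ₁ : γ ≤ 1) (hr : ∀ t a b, 0 ≤ r t a b)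
    (hlow : ∀ t ≤ (L : ℤ), r t = 0) (hhigh : ∀ t, T < t → r t = 0) (y : ℤ → K) :
    γ * (1 - γ ^ L) * totalReward r T y ≤ totalReward r T yhat := by
  have : Nonempty K := ⟨yhat 0⟩
  choose! P hP using hPS
  set V : ℤ → ℝ := fun i => discountedReward γ r (L + 1) i (P i)
  have hV : ∀ i, 0 ≤ V i := fun i => discountedReward_nonneg hγ₀ hr _ _ _
  have hVT : V (T + 1) = 0 := discountedReward_eq_zero hhigh (by omega) _ _
  have hstep : ∀ i ∈ Icc 1 T, V i ≤ r i (yhat (i - 1)) (yhat i) + γ * V (i + 1) := by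
    intro i hi
    obtain ⟨hi₁, hiT⟩ := mem_Icc.mp hi
    have htail : discountedReward γ r L (i + 1) (P i) ≤ V (i + 1) := by
      rcases lt_or_eq_of_le hiT with hlt | rfl
      · exact (discountedReward_le_succ hγ₀ hr _ _ _).trans
          ((hP i hi₁ hiT).discountedReward_le_succ (hP (i + 1) (by omega) hlt))
      · exact (discountedReward_eq_zero hhigh (by omega) _ _).trans_le (hV _)
    rw [show V i = _ from (hP i hi₁ hiT).discountedReward_eq]
    gcongr
  have hupper : (1 - γ) * ∑ i ∈ Icc 1 T, V i ≤ totalReward r T yhat :=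
    one_sub_mul_sum_le_of_le_add_mul_succ hV hVT hγ₀ hstep
  have hlower : γ * (∑ j ∈ range L, γ ^ j) * totalReward r T y ≤ ∑ i ∈ Icc 1 T, V i := by
    rw [mul_assoc, ← sum_discountedReward_succ hlow hhigh, mul_sum]
    exact sum_le_sum fun i hi =>
      (hP i (mem_Icc.mp hi).1 (mem_Icc.mp hi).2).mul_discountedReward_le hr y
  calc γ * (1 - γ ^ L) * totalReward r T y
      = (1 - γ) * (γ * (∑ j ∈ range L, γ ^ j) * totalReward r T y) := by
        rw [← mul_neg_geom_sum]; ring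
    _ ≤ (1 - γ) * ∑ i ∈ Icc 1 T, V i := by gcongr
    _ ≤ totalReward r T yhat := hupper

end PeekPaths

theorem one_add_one_div_mul_mul_inv_mul_one_sub_eq_one {L : ℕ} (hL : L ≠ 0) {G : ℝ}
    (hG : G ^ L = L + 1) (hG₀ : G ≠ 0) :
    (1 + 1 / (L : ℝ)) * G * (G⁻¹ * (1 - G⁻¹ ^ L)) = 1 := by
  rw [inv_pow, hG]
  field_simp
  ring

end PeekSearch

open PeekSearch in
theorem peek_search_competitive_first_order_complete_general
    (K : Type)
    (L : ℕ) (hL : 1 ≤ L)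
    (γ : ℝ) (hγ : γ = ((L : ℝ) + 1) ^ (-(1 : ℝ) / (L : ℝ)))
    (T : ℤ)
    (R : K → K → ℝ) (hR : ∀ y' y : K, 0 ≤ R y' y)
    (r : ℤ → K → K → ℝ)
    (hr : ∀ t : ℤ, r t = if ((L : ℤ) + 2 ≤ t ∧ t ≤ T - ((L : ℤ) + 1)) then R else 0)
    (y0 : K)
    (yhat : ℤ → K)
    (hPS : ∀ i : ℤ, 1 ≤ i → i ≤ T →
      ∃ y : ℤ → K, (∀ t : ℤ, t < i → y t = yhat t) ∧ y i = yhat i ∧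
        ∀ y' : ℤ → K, (∀ t : ℤ, t < i → y' t = yhat t) →
          (∑ j ∈ Finset.range (L + 1),
              γ ^ j * r (i + (j : ℤ)) (y' (i + (j : ℤ) - 1)) (y' (i + (j : ℤ))))
            ≤ ∑ j ∈ Finset.range (L + 1),
                γ ^ j * r (i + (j : ℤ)) (y (i + (j : ℤ) - 1)) (y (i + (j : ℤ))))
    (ON : ℝ) (hON : ON = ∑ i ∈ Finset.Icc (1 : ℤ) T, r i (yhat (i - 1)) (yhat i)) :
    ∀ y : ℤ → K, (∀ t : ℤ, t ≤ 0 → y t = y0) →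
      (∑ i ∈ Finset.Icc (1 : ℤ) T, r i (y (i - 1)) (y i))
        ≤ (1 + 1 / (L : ℝ)) * ((L : ℝ) + 1) ^ ((1 : ℝ) / (L : ℝ)) * ON := by
  intro y _
  have hL₀ : L ≠ 0 := by omega
  set G : ℝ := ((L : ℝ) + 1) ^ ((1 : ℝ) / (L : ℝ)) with hG_def
  have hG₁ : 1 ≤ G := Real.one_le_rpow (by simp) (by positivity)
  have hG : G ^ L = L + 1 := by
    rw [hG_def, one_div, Real.rpow_inv_natCast_pow (by positivity) hL₀]
  have hγG : γ = G⁻¹ := by rw [hγ, neg_div, Real.rpow_neg (by positivity)]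
  have hr₀ : ∀ t a b, 0 ≤ r t a b := by
    intro t a b
    rw [hr t]
    split_ifs
    exacts [hR a b, le_rfl]
  have hpad : ∀ t : ℤ, (t < L + 2 ∨ T - (L + 1) < t) → r t = 0 := fun t ht => by
    rw [hr t, if_neg (by omega)]
  have hbound : γ * (1 - γ ^ L) * totalReward r T y ≤ totalReward r T yhat :=
    IsPeekSearch.mul_totalReward_le hPS (hγG ▸ by positivity) (hγG ▸ inv_le_one_of_one_le₀ hG₁)
      hr₀ (fun t ht => hpad t (by omega)) (fun t ht => hpad t (by omega)) y
  calc totalReward r T y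
      = (1 + 1 / (L : ℝ)) * G * (γ * (1 - γ ^ L)) * totalReward r T y := by
        rw [hγG, one_add_one_div_mul_mul_inv_mul_one_sub_eq_one hL₀ hG (by positivity), one_mul]
    _ ≤ (1 + 1 / (L : ℝ)) * G * ON := by
        rw [mul_assoc, hON]
        exact mul_le_mul_of_nonneg_left hbound (by positivity)

/-- Peek Search with latency L ≥ 1 and discount γ = (L+1)^{-1/L} on a
first-order (n = 1) time-homogeneous instance with complete transition digraph (Δ = 1)
is (1 + 1/L)·(L+1)^{1/L}-competitive: OPT ≤ (1 + 1/L)·(L+1)^{1/L}·ON.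

The states form a finite nonempty set `K`; `R y' y` is the (nonnegative, time-homogeneous)
reward of a transition from `y'` to `y`; `r t` is the effective reward function at time `t`:
it equals `R` on the horizon `{1,…,T}` away from the first `L+1` and last `L+1` time steps
(zero padding) and is `0` elsewhere.  `yhat` is the sequence produced by Peek Search from the
dummy initial state `y0`: at each time `i ∈ {1,…,T}` there is a path of length `L+1`
(a sequence agreeing with `yhat` strictly before `i`) starting with `yhat i` whose `γ`-discounted
reward is maximal among all such paths (ties broken arbitrarily).  `ON` is the total reward
collected by Peek Search; the conclusion bounds the total reward of every offline state
sequence starting from the dummy state, hence bounds OPT. -/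
theorem peek_search_competitive_first_order_complete
    (K : Type) [Fintype K] [Nonempty K]
    (L : ℕ) (hL : 1 ≤ L)
    (γ : ℝ) (hγ : γ = ((L : ℝ) + 1) ^ (-(1 : ℝ) / (L : ℝ)))
    (T : ℤ)
    (R : K → K → ℝ) (hR : ∀ y' y : K, 0 ≤ R y' y)
    (r : ℤ → K → K → ℝ)
    (hr : ∀ t : ℤ, r t = if ((L : ℤ) + 2 ≤ t ∧ t ≤ T - ((L : ℤ) + 1)) then R else 0)
    (y0 : K)
    (yhat : ℤ → K) (hyhat0 : ∀ t : ℤ, t ≤ 0 → yhat t = y0)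
    (hPS : ∀ i : ℤ, 1 ≤ i → i ≤ T →
      ∃ y : ℤ → K, (∀ t : ℤ, t < i → y t = yhat t) ∧ y i = yhat i ∧
        ∀ y' : ℤ → K, (∀ t : ℤ, t < i → y' t = yhat t) →
          (∑ j ∈ Finset.range (L + 1),
              γ ^ j * r (i + (j : ℤ)) (y' (i + (j : ℤ) - 1)) (y' (i + (j : ℤ))))
            ≤ ∑ j ∈ Finset.range (L + 1),
                γ ^ j * r (i + (j : ℤ)) (y (i + (j : ℤ) - 1)) (y (i + (j : ℤ))))
    (ON : ℝ) (hON : ON = ∑ i ∈ Finset.Icc (1 : ℤ) T, r i (yhat (i - 1)) (yhat i)) :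
    ∀ y : ℤ → K, (∀ t : ℤ, t ≤ 0 → y t = y0) →
      (∑ i ∈ Finset.Icc (1 : ℤ) T, r i (y (i - 1)) (y i))
        ≤ (1 + 1 / (L : ℝ)) * ((L : ℝ) + 1) ^ ((1 : ℝ) / (L : ℝ)) * ON :=
  peek_search_competitive_first_order_complete_general K L hL γ hγ T R hR r hr y0 yhat hPS ON hON
end

section
/- Let n ≥ 1 and L ≥ n be integers and set γ = (n/(L+1))^{1/(L-n+1)}. Run Peek Search with latency L and discount factor γ on an n-th order time-homogeneous Markov reward instance whose transition digraph is complete (diameter Δ = 1). Then OPT ≤ ((L+1)/(L-n+1))·((L+1)/n)^{n/(L-n+1)}·ON; that is, the competitive ratio of Peek Search is at most ((L+1)/(L-n+1))·((L+1)/n)^{n/(L-n+1)}. -/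
/-!
Let `Λ i` be the discounted value of the window plan Peek Search commits to at time `i`.
Since the plan at `i`, shifted by one step, is admissible at time `i + 1`,
`Λ i ≤ ON_i + γ Λ (i+1)`, so `(1 - γ) ∑ Λ ≤ ON`. On a complete digraph one may instead switch
to any offline sequence `y` right after time `i`; after `n` steps the history is `y`'s own,
so `Λ i ≥ ∑_{j=n}^{L} γ^j F (i+j)` with `F` the rewards of `y`, and summing over `i` (zero padding
makes the shifts harmless) gives `∑ Λ ≥ (∑_{j=n}^{L} γ^j) · OPT`. Hence
`(γ^n - γ^(L+1)) · OPT ≤ ON`, and the chosen `γ` makes `1 / (γ^n - γ^(L+1))` the stated ratio.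
-/

open Finset

section Sums

lemma sum_Icc_add_right {M : Type*} [AddCommMonoid M] (f : ℤ → M) (a b c : ℤ) :
    ∑ i ∈ Icc a b, f (i + c) = ∑ i ∈ Icc (a + c) (b + c), f i := by
  rw [← map_add_right_Icc, sum_map]
  rfl

lemma sum_Icc_add_right_of_support_subset {M : Type*} [AddCommMonoid M] {f : ℤ → M}
    {a b c p q : ℤ} (hf : ∀ t ∉ Icc p q, f t = 0) (h₁ : Icc p q ⊆ Icc a b)
    (h₂ : Icc p q ⊆ Icc (a + c) (b + c)) :
    ∑ i ∈ Icc a b, f (i + c) = ∑ i ∈ Icc a b, f i := by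
  rw [sum_Icc_add_right, ← sum_subset h₂ fun t _ ht => hf t ht,
    ← sum_subset h₁ fun t _ ht => hf t ht]

lemma one_sub_mul_sum_Icc_le {Λ ρ : ℤ → ℝ} {γ : ℝ} {a b : ℤ} (hγ : 0 ≤ γ)
    (hend : Λ (b + 1) ≤ Λ a) (h : ∀ i ∈ Icc a b, Λ i ≤ ρ i + γ * Λ (i + 1)) :
    (1 - γ) * ∑ i ∈ Icc a b, Λ i ≤ ∑ i ∈ Icc a b, ρ i := by
  rcases lt_or_ge (b + 1) a with hba | hab
  · simp [Icc_eq_empty_of_lt (show b < a by omega)]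
  -- Shifting the index costs `Λ (b + 1) - Λ a ≤ 0`.
  have hshift : Λ a + ∑ i ∈ Icc a b, Λ (i + 1) = Λ (b + 1) + ∑ i ∈ Icc a b, Λ i := by
    rw [sum_Icc_add_right, ← sum_insert (by simp), insert_Icc_add_one_left_eq_Icc (by omega),
      ← insert_Icc_right_eq_Icc_add_one hab, sum_insert (by simp)]
  have hrec : ∑ i ∈ Icc a b, Λ i ≤ ∑ i ∈ Icc a b, ρ i + γ * ∑ i ∈ Icc a b, Λ (i + 1) := by
    rw [mul_sum, ← sum_add_distrib]
    exact sum_le_sum h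
  nlinarith

lemma geom_sum_Icc_mul_one_sub (x : ℝ) {m n : ℕ} (h : m ≤ n + 1) :
    (∑ j ∈ Icc m n, x ^ j) * (1 - x) = x ^ m - x ^ (n + 1) := by
  rw [← Ico_add_one_right_eq_Icc, geom_sum_Ico_mul_neg x h]

end Sums

section DiscountedWindow

def discountedWindow (γ : ℝ) (L : ℕ) (f : ℤ → ℝ) (i : ℤ) : ℝ :=
  ∑ j ∈ range (L + 1), γ ^ j * f (i + j)

variable {γ : ℝ} {L : ℕ} {f : ℤ → ℝ}

lemma discountedWindow_nonneg (hγ : 0 ≤ γ) (hf : ∀ t, 0 ≤ f t) (i : ℤ) :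
    0 ≤ discountedWindow γ L f i :=
  sum_nonneg fun j _ => mul_nonneg (pow_nonneg hγ j) (hf _)

lemma discountedWindow_le_add_mul_succ (hγ : 0 ≤ γ) (hf : ∀ t, 0 ≤ f t) (i : ℤ) :
    discountedWindow γ L f i ≤ f i + γ * discountedWindow γ L f (i + 1) := by
  have htail : ∑ j ∈ range L, γ ^ j * f (i + 1 + j) ≤ discountedWindow γ L f (i + 1) :=
    sum_le_sum_of_subset_of_nonneg (range_subset_range.2 (Nat.le_succ L))
      fun j _ _ => mul_nonneg (pow_nonneg hγ j) (hf _)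
  calc discountedWindow γ L f i = f i + γ * ∑ j ∈ range L, γ ^ j * f (i + 1 + j) := by
        rw [discountedWindow, sum_range_succ', mul_sum, add_comm]
        congr 1
        · simp
        · refine sum_congr rfl fun j _ => ?_
          push_cast
          ring_nf
    _ ≤ f i + γ * discountedWindow γ L f (i + 1) := by gcongr

lemma discountedWindow_eq_zero {i : ℤ} (hf : ∀ t, i ≤ t → f t = 0) :
    discountedWindow γ L f i = 0 :=
  sum_eq_zero fun j _ => by rw [hf _ (by omega), mul_zero]

lemma sum_Icc_le_discountedWindow (hγ : 0 ≤ γ) (hf : ∀ t, 0 ≤ f t) (n : ℕ) (i : ℤ) :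
    ∑ j ∈ Icc n L, γ ^ j * f (i + j) ≤ discountedWindow γ L f i :=
  sum_le_sum_of_subset_of_nonneg (fun j hj => by simp only [mem_Icc, mem_range] at hj ⊢; omega)
    fun j _ _ => mul_nonneg (pow_nonneg hγ j) (hf _)

end DiscountedWindow

section PeekSearch

variable {K : Type} {n L : ℕ} {γ : ℝ} {T : ℤ} {r : ℤ → (Fin n → K) → K → ℝ}

def stepReward (r : ℤ → (Fin n → K) → K → ℝ) (y : ℤ → K) (t : ℤ) : ℝ :=
  r t (fun k : Fin n => y (t - n + k)) (y t)

lemma stepReward_nonneg (hr : ∀ t h z, 0 ≤ r t h z) (y : ℤ → K) (t : ℤ) :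
    0 ≤ stepReward r y t :=
  hr _ _ _

lemma stepReward_congr {y y' : ℤ → K} {t : ℤ} (h : ∀ s, t - n ≤ s → s ≤ t → y s = y' s) :
    stepReward r y t = stepReward r y' t := by
  unfold stepReward
  congr 1
  · funext k
    exact h _ (by omega) (by omega)
  · exact h t (by omega) le_rfl

/-- `P i` is a window plan that Peek Search, having played `yhat` so far, may commit to at
time `i`. -/
def IsPeekPlan (γ : ℝ) (L : ℕ) (T : ℤ) (r : ℤ → (Fin n → K) → K → ℝ) (yhat : ℤ → K)
    (P : ℤ → ℤ → K) : Prop :=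
  ∀ i, 1 ≤ i → i ≤ T → (∀ t < i, P i t = yhat t) ∧ P i i = yhat i ∧
    ∀ y' : ℤ → K, (∀ t < i, y' t = yhat t) →
      discountedWindow γ L (stepReward r y') i ≤ discountedWindow γ L (stepReward r (P i)) i

lemma exists_isPeekPlan {yhat : ℤ → K}
    (h : ∀ i, 1 ≤ i → i ≤ T → ∃ y : ℤ → K, (∀ t < i, y t = yhat t) ∧ y i = yhat i ∧
      ∀ y' : ℤ → K, (∀ t < i, y' t = yhat t) →
        discountedWindow γ L (stepReward r y') i ≤ discountedWindow γ L (stepReward r y) i) :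
    ∃ P, IsPeekPlan γ L T r yhat P := by
  have : Nonempty (ℤ → K) := ⟨yhat⟩
  choose! P hP using h
  exact ⟨P, hP⟩

namespace IsPeekPlan

variable {yhat : ℤ → K} {P : ℤ → ℤ → K}

lemma window_le_add_mul_succ (hP : IsPeekPlan γ L T r yhat P) (hγ : 0 ≤ γ)
    (hr : ∀ t h z, 0 ≤ r t h z) (hr_zero : ∀ t, T < t → r t = 0) {i : ℤ} (hi : i ∈ Icc 1 T) :
    discountedWindow γ L (stepReward r (P i)) i ≤
      stepReward r yhat i + γ * discountedWindow γ L (stepReward r (P (i + 1))) (i + 1) := by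
  rw [mem_Icc] at hi
  obtain ⟨hpast, hnow, -⟩ := hP i hi.1 hi.2
  have hagree : ∀ t < i + 1, P i t = yhat t := fun t ht => by
    rcases (show t < i ∨ t = i by omega) with ht | rfl
    exacts [hpast t ht, hnow]
  have hcurrent : stepReward r (P i) i = stepReward r yhat i :=
    stepReward_congr fun s _ hs => hagree s (by omega)
  -- At `i = T` the shifted plan only sees times beyond the horizon.
  have hnext : discountedWindow γ L (stepReward r (P i)) (i + 1) ≤
      discountedWindow γ L (stepReward r (P (i + 1))) (i + 1) := by
    rcases (show i + 1 ≤ T ∨ i = T by omega) with hiT | rfl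
    · exact (hP (i + 1) (by omega) hiT).2.2 (P i) hagree
    · rw [discountedWindow_eq_zero fun t ht => by simp [stepReward, hr_zero t (by omega)]]
      exact discountedWindow_nonneg hγ (stepReward_nonneg hr _) _
  calc discountedWindow γ L (stepReward r (P i)) i
      ≤ stepReward r (P i) i + γ * discountedWindow γ L (stepReward r (P i)) (i + 1) :=
        discountedWindow_le_add_mul_succ hγ (stepReward_nonneg hr _) i
    _ ≤ _ := by rw [hcurrent]; gcongr

lemma one_sub_mul_sum_window_le (hP : IsPeekPlan γ L T r yhat P) (hγ : 0 ≤ γ)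
    (hr : ∀ t h z, 0 ≤ r t h z) (hr_zero : ∀ t, T < t → r t = 0) :
    (1 - γ) * ∑ i ∈ Icc 1 T, discountedWindow γ L (stepReward r (P i)) i ≤
      ∑ i ∈ Icc 1 T, stepReward r yhat i := by
  refine one_sub_mul_sum_Icc_le hγ ?_ fun i hi => hP.window_le_add_mul_succ hγ hr hr_zero hi
  rw [discountedWindow_eq_zero fun t ht => by simp [stepReward, hr_zero t (by omega)]]
  exact discountedWindow_nonneg hγ (stepReward_nonneg hr _) _

/-- Switching to `y` right after time `i` is admissible for Peek Search, and from `n` steps on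
its rewards are those of `y`. -/
lemma sum_Icc_le_window (hP : IsPeekPlan γ L T r yhat P) (hγ : 0 ≤ γ)
    (hr : ∀ t h z, 0 ≤ r t h z) (y : ℤ → K) {i : ℤ} (hi : i ∈ Icc 1 T) :
    ∑ j ∈ Icc n L, γ ^ j * stepReward r y (i + j) ≤
      discountedWindow γ L (stepReward r (P i)) i := by
  rw [mem_Icc] at hi
  set y' : ℤ → K := fun t => if t < i then yhat t else y t
  have hswitch : ∑ j ∈ Icc n L, γ ^ j * stepReward r y (i + j) =
      ∑ j ∈ Icc n L, γ ^ j * stepReward r y' (i + j) := by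
    refine sum_congr rfl fun j hj => ?_
    rw [mem_Icc] at hj
    rw [stepReward_congr fun s hs _ => (if_neg (by omega) : y' s = y s).symm]
  calc _ = ∑ j ∈ Icc n L, γ ^ j * stepReward r y' (i + j) := hswitch
    _ ≤ discountedWindow γ L (stepReward r y') i :=
        sum_Icc_le_discountedWindow hγ (stepReward_nonneg hr _) n i
    _ ≤ _ := (hP i hi.1 hi.2).2.2 y' fun t ht => if_pos ht

lemma geom_sum_mul_sum_le_sum_window (hP : IsPeekPlan γ L T r yhat P) (hγ : 0 ≤ γ)
    (hr : ∀ t h z, 0 ≤ r t h z) (hr_zero : ∀ t ∉ Icc ((L : ℤ) + 2) (T - ((L : ℤ) + 1)), r t = 0)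
    (y : ℤ → K) :
    (∑ j ∈ Icc n L, γ ^ j) * ∑ i ∈ Icc 1 T, stepReward r y i ≤
      ∑ i ∈ Icc 1 T, discountedWindow γ L (stepReward r (P i)) i := by
  have hshift : ∀ j ∈ Icc n L,
      ∑ i ∈ Icc 1 T, stepReward r y (i + j) = ∑ i ∈ Icc 1 T, stepReward r y i := by
    intro j hj
    rw [mem_Icc] at hj
    exact sum_Icc_add_right_of_support_subset (p := L + 2) (q := T - (L + 1)) (c := j)
      (fun t ht => by simp [stepReward, hr_zero t ht])
      (Icc_subset_Icc (by omega) (by omega)) (Icc_subset_Icc (by omega) (by omega))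
  calc (∑ j ∈ Icc n L, γ ^ j) * ∑ i ∈ Icc 1 T, stepReward r y i
      = ∑ i ∈ Icc 1 T, ∑ j ∈ Icc n L, γ ^ j * stepReward r y (i + j) := by
        rw [sum_comm, sum_mul]
        exact sum_congr rfl fun j hj => by rw [← mul_sum, hshift j hj]
    _ ≤ _ := sum_le_sum fun i hi => hP.sum_Icc_le_window hγ hr y hi

end IsPeekPlan

end PeekSearch

section Discount

noncomputable def peekDiscount (n L : ℕ) : ℝ :=
  ((n : ℝ) / ((L : ℝ) + 1)) ^ ((1 : ℝ) / ((L : ℝ) - (n : ℝ) + 1))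

noncomputable def peekRatio (n L : ℕ) : ℝ :=
  ((L : ℝ) + 1) / ((L : ℝ) - (n : ℝ) + 1) *
    (((L : ℝ) + 1) / (n : ℝ)) ^ ((n : ℝ) / ((L : ℝ) - (n : ℝ) + 1))

variable {n L : ℕ}

lemma peekDiscount_nonneg : 0 ≤ peekDiscount n L :=
  Real.rpow_nonneg (by positivity) _

lemma peekDiscount_le_one (hL : n ≤ L) : peekDiscount n L ≤ 1 := by
  have hL' : (n : ℝ) ≤ L := by exact_mod_cast hL
  exact Real.rpow_le_one (by positivity) (div_le_one_of_le₀ (by linarith) (by positivity))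
    (div_nonneg zero_le_one (by linarith))

lemma peekDiscount_pow (m : ℕ) :
    peekDiscount n L ^ m = ((n : ℝ) / ((L : ℝ) + 1)) ^ ((m : ℝ) / ((L : ℝ) - (n : ℝ) + 1)) := by
  rw [peekDiscount, ← Real.rpow_natCast, ← Real.rpow_mul (by positivity), one_div_mul_eq_div]

lemma peekRatio_nonneg (hL : n ≤ L) : 0 ≤ peekRatio n L := by
  have hL' : (n : ℝ) ≤ L := by exact_mod_cast hL
  exact mul_nonneg (div_nonneg (by positivity) (by linarith)) (Real.rpow_nonneg (by positivity) _)

lemma peekRatio_mul_pow_sub_pow (hn : 1 ≤ n) (hL : n ≤ L) :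
    peekRatio n L * (peekDiscount n L ^ n - peekDiscount n L ^ (L + 1)) = 1 := by
  rw [peekRatio]
  have hn' : (1 : ℝ) ≤ n := by exact_mod_cast hn
  have hL' : (n : ℝ) ≤ L := by exact_mod_cast hL
  set a : ℝ := (n : ℝ) / ((L : ℝ) + 1)
  set m : ℝ := (L : ℝ) - (n : ℝ) + 1
  have hm : 0 < m := by simp only [m]; linarith
  have ha : 0 < a := by positivity
  have hgap : peekDiscount n L ^ (L + 1 - n) = a := by
    rw [peekDiscount_pow, Nat.cast_sub (by omega), Nat.cast_add_one,
      show (L : ℝ) + 1 - n = m by ring, div_self hm.ne', Real.rpow_one]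
  have hdiff : peekDiscount n L ^ n - peekDiscount n L ^ (L + 1) = a ^ ((n : ℝ) / m) * (1 - a) := by
    rw [show L + 1 = n + (L + 1 - n) by omega, pow_add, hgap, peekDiscount_pow]
    ring
  have hinv : (((L : ℝ) + 1) / (n : ℝ)) ^ ((n : ℝ) / m) = (a ^ ((n : ℝ) / m))⁻¹ := by
    rw [← Real.inv_rpow ha.le, inv_div]
  have hcompl : 1 - a = m / ((L : ℝ) + 1) := by
    simp only [a, m]
    field_simp
    ring
  have hpos : 0 < a ^ ((n : ℝ) / m) := Real.rpow_pos_of_pos ha _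
  rw [hdiff, hinv, hcompl]
  field_simp

end Discount

theorem peek_search_competitive_nth_order_complete_general
    (K : Type)
    (n : ℕ) (hn : 1 ≤ n)
    (L : ℕ) (hL : n ≤ L)
    (γ : ℝ) (hγ : γ = ((n : ℝ) / ((L : ℝ) + 1)) ^ ((1 : ℝ) / ((L : ℝ) - (n : ℝ) + 1)))
    (T : ℤ)
    (R : (Fin n → K) → K → ℝ) (hR : ∀ h y, 0 ≤ R h y)
    (r : ℤ → (Fin n → K) → K → ℝ)
    (hr : ∀ t : ℤ, r t = if ((L : ℤ) + 2 ≤ t ∧ t ≤ T - ((L : ℤ) + 1)) then R else 0)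
    (d : ℤ → K)
    (yhat : ℤ → K)
    (hPS : ∀ i : ℤ, 1 ≤ i → i ≤ T →
      ∃ y : ℤ → K, (∀ t : ℤ, t < i → y t = yhat t) ∧ y i = yhat i ∧
        ∀ y' : ℤ → K, (∀ t : ℤ, t < i → y' t = yhat t) →
          (∑ j ∈ Finset.range (L + 1),
              γ ^ j * r (i + (j : ℤ))
                (fun k : Fin n => y' (i + (j : ℤ) - (n : ℤ) + ((k : ℕ) : ℤ)))
                (y' (i + (j : ℤ))))
            ≤ ∑ j ∈ Finset.range (L + 1),
                γ ^ j * r (i + (j : ℤ))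
                  (fun k : Fin n => y (i + (j : ℤ) - (n : ℤ) + ((k : ℕ) : ℤ)))
                  (y (i + (j : ℤ))))
    (ON : ℝ)
    (hON : ON = ∑ i ∈ Finset.Icc (1 : ℤ) T,
        r i (fun k : Fin n => yhat (i - (n : ℤ) + ((k : ℕ) : ℤ))) (yhat i)) :
    ∀ y : ℤ → K, (∀ t : ℤ, t ≤ 0 → y t = d t) →
      (∑ i ∈ Finset.Icc (1 : ℤ) T,
          r i (fun k : Fin n => y (i - (n : ℤ) + ((k : ℕ) : ℤ))) (y i))
        ≤ (((L : ℝ) + 1) / ((L : ℝ) - (n : ℝ) + 1)) *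
            (((L : ℝ) + 1) / (n : ℝ)) ^ ((n : ℝ) / ((L : ℝ) - (n : ℝ) + 1)) * ON := by
  intro y _
  change γ = peekDiscount n L at hγ
  obtain ⟨P, hP⟩ := exists_isPeekPlan hPS
  have hr_nonneg : ∀ t h z, 0 ≤ r t h z := fun t h z => by
    rw [hr]; split_ifs; exacts [hR h z, le_rfl]
  have hr_zero : ∀ t ∉ Icc ((L : ℤ) + 2) (T - ((L : ℤ) + 1)), r t = 0 := fun t ht => by
    rw [hr, if_neg (by simpa using ht)]
  have hγ0 : 0 ≤ γ := hγ ▸ peekDiscount_nonneg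
  have hγ_le_one : 0 ≤ 1 - γ := sub_nonneg.2 (hγ ▸ peekDiscount_le_one hL)
  have hratio := peekRatio_mul_pow_sub_pow hn hL
  rw [← hγ, ← geom_sum_Icc_mul_one_sub γ (by omega)] at hratio
  have hcompetitive :
      (1 - γ) * ((∑ j ∈ Icc n L, γ ^ j) * ∑ i ∈ Icc 1 T, stepReward r y i) ≤ ON := by
    rw [hON]
    exact (mul_le_mul_of_nonneg_left (hP.geom_sum_mul_sum_le_sum_window hγ0 hr_nonneg hr_zero y)
      hγ_le_one).trans (hP.one_sub_mul_sum_window_le hγ0 hr_nonneg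
        fun t ht => hr_zero t (by rw [mem_Icc]; omega))
  change ∑ i ∈ Icc 1 T, stepReward r y i ≤ peekRatio n L * ON
  calc ∑ i ∈ Icc 1 T, stepReward r y i
      = peekRatio n L * ((∑ j ∈ Icc n L, γ ^ j) * (1 - γ)) * ∑ i ∈ Icc 1 T, stepReward r y i := by
        rw [hratio, one_mul]
    _ = peekRatio n L * ((1 - γ) * ((∑ j ∈ Icc n L, γ ^ j) * ∑ i ∈ Icc 1 T, stepReward r y i)) := by
        ring
    _ ≤ peekRatio n L * ON := mul_le_mul_of_nonneg_left hcompetitive (peekRatio_nonneg hL)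

/-- Peek Search with latency L ≥ n and discount γ = (n/(L+1))^{1/(L−n+1)} on an
n-th order time-homogeneous instance with complete transition digraph (Δ = 1) is
((L+1)/(L−n+1))·((L+1)/n)^{n/(L−n+1)}-competitive.

`R h y` is the (nonnegative, time-homogeneous) reward of moving to state `y` when the `n`
preceding states are `h 0, …, h (n-1)` (in chronological order); `r t` is the effective reward
function at time `t`: it equals `R` on the horizon away from the first `L+1` and last `L+1`
time steps (zero padding) and is `0` elsewhere.  `d` gives the dummy initial states at times
`≤ 0`.  `yhat` is the sequence produced by Peek Search: at each time `i ∈ {1,…,T}` there is a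
sequence agreeing with `yhat` strictly before `i` and starting with `yhat i` at `i`, whose
`γ`-discounted reward over the window `{i,…,i+L}` is maximal among all such sequences.
The conclusion bounds the total reward of every offline sequence starting from the dummy
states, hence bounds OPT. -/
theorem peek_search_competitive_nth_order_complete
    (K : Type) [Fintype K] [Nonempty K]
    (n : ℕ) (hn : 1 ≤ n)
    (L : ℕ) (hL : n ≤ L)
    (γ : ℝ) (hγ : γ = ((n : ℝ) / ((L : ℝ) + 1)) ^ ((1 : ℝ) / ((L : ℝ) - (n : ℝ) + 1)))
    (T : ℤ)
    (R : (Fin n → K) → K → ℝ) (hR : ∀ h y, 0 ≤ R h y)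
    (r : ℤ → (Fin n → K) → K → ℝ)
    (hr : ∀ t : ℤ, r t = if ((L : ℤ) + 2 ≤ t ∧ t ≤ T - ((L : ℤ) + 1)) then R else 0)
    (d : ℤ → K)
    (yhat : ℤ → K) (hyhat0 : ∀ t : ℤ, t ≤ 0 → yhat t = d t)
    (hPS : ∀ i : ℤ, 1 ≤ i → i ≤ T →
      ∃ y : ℤ → K, (∀ t : ℤ, t < i → y t = yhat t) ∧ y i = yhat i ∧
        ∀ y' : ℤ → K, (∀ t : ℤ, t < i → y' t = yhat t) →
          (∑ j ∈ Finset.range (L + 1),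
              γ ^ j * r (i + (j : ℤ))
                (fun k : Fin n => y' (i + (j : ℤ) - (n : ℤ) + ((k : ℕ) : ℤ)))
                (y' (i + (j : ℤ))))
            ≤ ∑ j ∈ Finset.range (L + 1),
                γ ^ j * r (i + (j : ℤ))
                  (fun k : Fin n => y (i + (j : ℤ) - (n : ℤ) + ((k : ℕ) : ℤ)))
                  (y (i + (j : ℤ))))
    (ON : ℝ)
    (hON : ON = ∑ i ∈ Finset.Icc (1 : ℤ) T,
        r i (fun k : Fin n => yhat (i - (n : ℤ) + ((k : ℕ) : ℤ))) (yhat i)) :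
    ∀ y : ℤ → K, (∀ t : ℤ, t ≤ 0 → y t = d t) →
      (∑ i ∈ Finset.Icc (1 : ℤ) T,
          r i (fun k : Fin n => y (i - (n : ℤ) + ((k : ℕ) : ℤ))) (y i))
        ≤ (((L : ℝ) + 1) / ((L : ℝ) - (n : ℝ) + 1)) *
            (((L : ℝ) + 1) / (n : ℝ)) ^ ((n : ℝ) / ((L : ℝ) - (n : ℝ) + 1)) * ON :=
  peek_search_competitive_nth_order_complete_general K n hn L hL γ hγ T R hR r hr d yhat hPS ON hON
end

section
/- Let n ≥ 1 and L ≥ 1 be integers and set a = ((n+L−1) + √((n+L−1)² + 4n))/(2n). Then min{ 1 + n·a/(1 + (L−1)·a), 1 + (1 + n·a)/(L·a) } > 1 + (n/L)·(1 + (n+L−1)/((n+L−1)² + n)). -/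
set_option maxHeartbeats 1000000


/-- with a = ((n+L−1)+√((n+L−1)²+4n))/(2n),
min{1 + na/(1+(L−1)a), 1 + (1+na)/(La)} > 1 + (n/L)·(1 + (n+L−1)/((n+L−1)²+n)). -/
theorem lower_bound_min_ratio (n L : ℕ) (hn : 1 ≤ n) (hL : 1 ≤ L)
    (a : ℝ)
    (ha : a = (((n : ℝ) + (L : ℝ) - 1) +
        Real.sqrt (((n : ℝ) + (L : ℝ) - 1) ^ 2 + 4 * (n : ℝ))) / (2 * (n : ℝ))) :
    1 + ((n : ℝ) / (L : ℝ)) *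
        (1 + ((n : ℝ) + (L : ℝ) - 1) / (((n : ℝ) + (L : ℝ) - 1) ^ 2 + (n : ℝ)))
      < min (1 + (n : ℝ) * a / (1 + ((L : ℝ) - 1) * a))
            (1 + (1 + (n : ℝ) * a) / ((L : ℝ) * a)) := by
  have hn1 : (1:ℝ) ≤ n := by exact_mod_cast hn
  have hL1 : (1:ℝ) ≤ L := by exact_mod_cast hL
  have hn0 : (0:ℝ) < n := by linarith
  have hL0 : (0:ℝ) < L := by linarith
  set m : ℝ := (n:ℝ) + (L:ℝ) - 1 with hm
  have hm1 : (1:ℝ) ≤ m := by rw [hm]; linarith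
  have hm0 : (0:ℝ) < m := by linarith
  have hmn : (n:ℝ) ≤ m := by rw [hm]; linarith
  have hLm : (L:ℝ) = m + 1 - (n:ℝ) := by rw [hm]; ring
  set s : ℝ := Real.sqrt (m ^ 2 + 4 * (n:ℝ)) with hsdef
  have hs2 : s ^ 2 = m ^ 2 + 4 * (n:ℝ) := Real.sq_sqrt (by positivity)
  have hs0 : (0:ℝ) < s := Real.sqrt_pos.2 (by positivity)
  have h2na : 2 * (n:ℝ) * a = m + s := by
    rw [ha]; field_simp
  have ha0 : (0:ℝ) < a := by nlinarith [h2na, hm0, hs0, hn0]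
  have key : (n:ℝ) * a ^ 2 = m * a + 1 := by nlinarith [hs2, h2na]
  have hsm : m < s := by
    rw [hsdef]
    exact (Real.lt_sqrt hm0.le).2 (by nlinarith)
  have hna_m : m < (n:ℝ) * a := by nlinarith [h2na, hsm]
  have hden : (0:ℝ) < m ^ 2 + (n:ℝ) := by positivity
  refine lt_min ?_ ?_
  · -- first branch
    have hgt1 : (m * (m + 1) + 2 * (n:ℝ)) / (m + 1) < s := by
      rw [hsdef]
      apply (Real.lt_sqrt (by positivity)).2
      rw [div_pow, div_lt_iff₀ (by positivity)]
      nlinarith [hmn, hn0, hm0]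
    have hgt1' : m * (m + 1) + 2 * (n:ℝ) < s * (m + 1) := by
      have := (div_lt_iff₀ (by positivity : (0:ℝ) < m + 1)).1 hgt1
      linarith
    have hB : m * (m + 1) + (n:ℝ) < (n:ℝ) * a * (m + 1) := by nlinarith [h2na, hgt1']
    have hD : (0:ℝ) < 1 + ((L:ℝ) - 1) * a := by
      have := mul_nonneg (by linarith : (0:ℝ) ≤ (L:ℝ) - 1) ha0.le
      linarith
    have e1 : (n:ℝ) / (L:ℝ) * (1 + m / (m ^ 2 + (n:ℝ)))
        = (n:ℝ) * (m ^ 2 + (n:ℝ) + m) / ((L:ℝ) * (m ^ 2 + (n:ℝ))) := by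
      field_simp [hL0.ne', hden.ne']
    have h1 : (n:ℝ) / (L:ℝ) * (1 + m / (m ^ 2 + (n:ℝ)))
        < (n:ℝ) * a / (1 + ((L:ℝ) - 1) * a) := by
      rw [e1, div_lt_div_iff₀ (by positivity) hD]
      nlinarith [hB, hn0, hLm, mul_pos hn0 (sub_pos.2 hB)]
    linarith
  · -- second branch
    have eG : (n:ℝ) * a * m * a = m ^ 2 * a + m := by linear_combination m * key
    have hG : (n:ℝ) * a * m < m ^ 2 + (n:ℝ) := by
      have h : (n:ℝ) * a * m * a < (m ^ 2 + (n:ℝ)) * a := by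
        rw [eG]; nlinarith [hna_m]
      exact lt_of_mul_lt_mul_right h ha0.le
    have e1 : (n:ℝ) / (L:ℝ) * (1 + m / (m ^ 2 + (n:ℝ)))
        = (n:ℝ) * (m ^ 2 + (n:ℝ) + m) / ((L:ℝ) * (m ^ 2 + (n:ℝ))) := by
      field_simp [hL0.ne', hden.ne']
    have h2 : (n:ℝ) / (L:ℝ) * (1 + m / (m ^ 2 + (n:ℝ)))
        < (1 + (n:ℝ) * a) / ((L:ℝ) * a) := by
      rw [e1, div_lt_div_iff₀ (by positivity) (by positivity)]
      nlinarith [hG, hL0, mul_pos hL0 (sub_pos.2 hG)]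
    linarith
end
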